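/- arXiv:2005.00161 — 4 statements merged into one kernel-verified Lean document; each statement's English description precedes it below -/
import Mathlib

section
/- For real numbers λ_i, λ_j, λ_k with λ_k ≥ λ_j ≥ λ_i ≥ 1, one has λ_i² + λ_j² + λ_k² − 2λ_iλ_j − 2λ_iλ_k − 2λ_kλ_j + 3λ_iλ_jλ_k ≥ 0, with equality if and only if λ_i = λ_j = λ_k = 1. -/
/-!
Substituting `a = 1 + x`, `b = 1 + y`, `c = 1 + z` turns the form into
`x + y + z + (x² + y² + z²) + (xy + yz + zx) + 3xyz`, a polynomial with nonnegative coefficients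
and no constant term. For `x, y, z ≥ 0` it is therefore at least `x + y + z`, which vanishes only
at `x = y = z = 0`.
-/

section RigidityForm

variable {R : Type*} [CommRing R]

def rigidityForm (a b c : R) : R :=
  a^2 + b^2 + c^2 - 2*a*b - 2*a*c - 2*c*b + 3*a*b*c

theorem rigidityForm_one_add (x y z : R) :
    rigidityForm (1 + x) (1 + y) (1 + z) =
      x + y + z + (x^2 + y^2 + z^2 + x*y + y*z + z*x + 3*x*y*z) := by
  unfold rigidityForm
  ring

variable [LinearOrder R] [IsStrictOrderedRing R]

theorem add_add_le_rigidityForm_one_add {x y z : R} (hx : 0 ≤ x) (hy : 0 ≤ y) (hz : 0 ≤ z) :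
    x + y + z ≤ rigidityForm (1 + x) (1 + y) (1 + z) := by
  rw [rigidityForm_one_add]
  exact le_add_of_nonneg_right (by positivity)

theorem exists_nonneg_eq_one_add {a : R} (ha : 1 ≤ a) : ∃ x, 0 ≤ x ∧ a = 1 + x :=
  ⟨a - 1, sub_nonneg.2 ha, by ring⟩

theorem rigidityForm_nonneg {a b c : R} (ha : 1 ≤ a) (hb : 1 ≤ b) (hc : 1 ≤ c) :
    0 ≤ rigidityForm a b c := by
  obtain ⟨x, hx, rfl⟩ := exists_nonneg_eq_one_add ha
  obtain ⟨y, hy, rfl⟩ := exists_nonneg_eq_one_add hb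
  obtain ⟨z, hz, rfl⟩ := exists_nonneg_eq_one_add hc
  have := add_add_le_rigidityForm_one_add hx hy hz
  linarith

theorem rigidityForm_eq_zero_iff {a b c : R} (ha : 1 ≤ a) (hb : 1 ≤ b) (hc : 1 ≤ c) :
    rigidityForm a b c = 0 ↔ a = 1 ∧ b = 1 ∧ c = 1 := by
  refine ⟨fun h0 => ?_, ?_⟩
  · obtain ⟨x, hx, rfl⟩ := exists_nonneg_eq_one_add ha
    obtain ⟨y, hy, rfl⟩ := exists_nonneg_eq_one_add hb
    obtain ⟨z, hz, rfl⟩ := exists_nonneg_eq_one_add hc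
    have := add_add_le_rigidityForm_one_add hx hy hz
    refine ⟨?_, ?_, ?_⟩ <;> linarith
  · rintro ⟨rfl, rfl, rfl⟩
    norm_num [rigidityForm]

end RigidityForm

theorem stmt_0 (li lj lk : ℝ) (h1 : 1 ≤ li) (hij : li ≤ lj) (hjk : lj ≤ lk) :
    0 ≤ li^2 + lj^2 + lk^2 - 2*li*lj - 2*li*lk - 2*lk*lj + 3*li*lj*lk ∧
    (li^2 + lj^2 + lk^2 - 2*li*lj - 2*li*lk - 2*lk*lj + 3*li*lj*lk = 0 ↔
      li = 1 ∧ lj = 1 ∧ lk = 1) := by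
  have h2 : 1 ≤ lj := h1.trans hij
  have h3 : 1 ≤ lk := h2.trans hjk
  exact ⟨rigidityForm_nonneg h1 h2 h3, rigidityForm_eq_zero_iff h1 h2 h3⟩
end

section
/- For any real numbers λ_i, λ_j, λ_k ≥ 1 the expression λ_k/(λ_iλ_j) + λ_i/(λ_jλ_k) + λ_j/(λ_kλ_i) − 2/λ_i − 2/λ_j − 2/λ_k + 3 is nonnegative, with equality if and only if λ_i = λ_j = λ_k = 1. -/
/-!
Clearing the denominator `λᵢλⱼλₖ`, the expression becomes the cubic
`N(x, y, z) = x² + y² + z² - 2(xy + yz + zx) + 3xyz`. Shifting to `x = 1 + a`, `y = 1 + b`,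
`z = 1 + c` every coefficient of `N` turns nonnegative:
`N = (a + b + c) + (a² + b² + c²) + (ab + bc + ca) + 3abc`.
For `a, b, c ≥ 0` this is at least `a + b + c`, which gives both the inequality and the equality case.
-/

def symmetrizedNumerator (x y z : ℝ) : ℝ :=
  x ^ 2 + y ^ 2 + z ^ 2 - 2 * (x * y + y * z + z * x) + 3 * (x * y * z)

lemma symmetrizedNumerator_one_add (a b c : ℝ) :
    symmetrizedNumerator (1 + a) (1 + b) (1 + c) =
      (a + b + c) + (a ^ 2 + b ^ 2 + c ^ 2) + (a * b + b * c + c * a) + 3 * (a * b * c) := by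
  unfold symmetrizedNumerator
  ring

lemma sub_one_add_sub_one_add_sub_one_le_symmetrizedNumerator {x y z : ℝ}
    (hx : 1 ≤ x) (hy : 1 ≤ y) (hz : 1 ≤ z) :
    (x - 1) + (y - 1) + (z - 1) ≤ symmetrizedNumerator x y z := by
  obtain ⟨a, ha, rfl⟩ : ∃ a, 0 ≤ a ∧ x = 1 + a := ⟨x - 1, by linarith, by ring⟩
  obtain ⟨b, hb, rfl⟩ : ∃ b, 0 ≤ b ∧ y = 1 + b := ⟨y - 1, by linarith, by ring⟩
  obtain ⟨c, hc, rfl⟩ : ∃ c, 0 ≤ c ∧ z = 1 + c := ⟨z - 1, by linarith, by ring⟩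
  rw [symmetrizedNumerator_one_add]
  have : 0 ≤ a * b * c := by positivity
  nlinarith [sq_nonneg a, sq_nonneg b, sq_nonneg c, mul_nonneg ha hb, mul_nonneg hb hc,
    mul_nonneg hc ha]

lemma symmetrized_eq_symmetrizedNumerator_div {x y z : ℝ} (hx : x ≠ 0) (hy : y ≠ 0) (hz : z ≠ 0) :
    z / (x * y) + x / (y * z) + y / (z * x) - 2 / x - 2 / y - 2 / z + 3 =
      symmetrizedNumerator x y z / (x * y * z) := by
  unfold symmetrizedNumerator
  field_simp
  ring

theorem stmt_1 (li lj lk : ℝ) (hi : 1 ≤ li) (hj : 1 ≤ lj) (hk : 1 ≤ lk) :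
    0 ≤ lk/(li*lj) + li/(lj*lk) + lj/(lk*li) - 2/li - 2/lj - 2/lk + 3 ∧
    (lk/(li*lj) + li/(lj*lk) + lj/(lk*li) - 2/li - 2/lj - 2/lk + 3 = 0 ↔
      li = 1 ∧ lj = 1 ∧ lk = 1) := by
  have hprod : 0 < li * lj * lk := by positivity
  have hN := sub_one_add_sub_one_add_sub_one_le_symmetrizedNumerator hi hj hk
  rw [symmetrized_eq_symmetrizedNumerator_div (by positivity) (by positivity) (by positivity)]
  refine ⟨div_nonneg (by linarith) hprod.le, fun h => ?_, ?_⟩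
  · have hN0 : symmetrizedNumerator li lj lk = 0 :=
      (div_eq_zero_iff.mp h).resolve_right hprod.ne'
    exact ⟨by linarith, by linarith, by linarith⟩
  · rintro ⟨rfl, rfl, rfl⟩
    norm_num [symmetrizedNumerator]
end

section
/- Let n ≥ 1 and let C_{ij}^k (1 ≤ i,j,k ≤ n) be real numbers, fully antisymmetric in all three indices in the sense that A_{ij}^k = (C_{ij}^k)² is symmetric in (i,j,k). Let λ_1,…,λ_n ≥ 1. If Σ_{i,j,k} (C_{ij}^k)² [λ_k/(λ_iλ_j) + 1 − 2/λ_i] ≤ 0, then for every triple (i,j,k) either C_{ij}^k = 0 or λ_i = λ_j = λ_k = 1. -/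
/-!
Since `A` is invariant under cyclic permutations of `(i, j, k)`, the sum is unchanged when the
bracket is replaced by its cyclic average, which is a third of `symmetrizedBracket`. Writing
`a = 1 + x`, `b = 1 + y`, `c = 1 + z`, one finds
`abc · symmetrizedBracket a b c = x + y + z + x² + y² + z² + xy + yz + zx + 3xyz`,
which is nonnegative and vanishes only at `x = y = z = 0`. A nonpositive sum of nonnegative
terms has all terms zero.
-/

open Finset

noncomputable def symmetrizedBracket (a b c : ℝ) : ℝ :=
  c / (a * b) + a / (b * c) + b / (c * a) + 3 - 2 / a - 2 / b - 2 / c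

lemma sub_one_add_sub_one_add_sub_one_div_le_symmetrizedBracket {a b c : ℝ}
    (ha : 1 ≤ a) (hb : 1 ≤ b) (hc : 1 ≤ c) :
    ((a - 1) + (b - 1) + (c - 1)) / (a * b * c) ≤ symmetrizedBracket a b c := by
  have hx := sub_nonneg.2 ha
  have hy := sub_nonneg.2 hb
  have hz := sub_nonneg.2 hc
  have habc : 0 < a * b * c := by positivity
  have hexpand : symmetrizedBracket a b c
      = (a ^ 2 + b ^ 2 + c ^ 2 + 3 * a * b * c - 2 * (a * b + b * c + c * a)) / (a * b * c) := by
    unfold symmetrizedBracket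
    field_simp
    ring
  rw [hexpand]
  gcongr
  nlinarith [mul_nonneg hx hy, mul_nonneg hy hz, mul_nonneg hz hx,
    mul_nonneg (mul_nonneg hx hy) hz]

lemma symmetrizedBracket_nonneg {a b c : ℝ} (ha : 1 ≤ a) (hb : 1 ≤ b) (hc : 1 ≤ c) :
    0 ≤ symmetrizedBracket a b c := by
  have hsum : 0 ≤ ((a - 1) + (b - 1) + (c - 1)) / (a * b * c) := by
    have := sub_nonneg.2 ha; have := sub_nonneg.2 hb; have := sub_nonneg.2 hc
    positivity
  exact hsum.trans (sub_one_add_sub_one_add_sub_one_div_le_symmetrizedBracket ha hb hc)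

lemma eq_one_of_symmetrizedBracket_eq_zero {a b c : ℝ} (ha : 1 ≤ a) (hb : 1 ≤ b) (hc : 1 ≤ c)
    (h : symmetrizedBracket a b c = 0) : a = 1 ∧ b = 1 ∧ c = 1 := by
  have hle := h ▸ sub_one_add_sub_one_add_sub_one_div_le_symmetrizedBracket ha hb hc
  have hsum : (a - 1) + (b - 1) + (c - 1) ≤ 0 := by
    simpa using (div_le_iff₀ (by positivity)).1 hle
  refine ⟨?_, ?_, ?_⟩ <;> linarith

lemma cyclic_sum_bracket (a b c : ℝ) :
    (c / (a * b) + 1 - 2 / a) + (b / (c * a) + 1 - 2 / c) + (a / (b * c) + 1 - 2 / b)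
      = symmetrizedBracket a b c := by
  unfold symmetrizedBracket
  ring

section TripleSum

variable {ι : Type*} [Fintype ι]

lemma sum_sum_sum_mul_rotate {A : ι → ι → ι → ℝ} (hA : ∀ i j k, A i j k = A j k i)
    (f : ι → ι → ι → ℝ) :
    ∑ i, ∑ j, ∑ k, A i j k * f i j k = ∑ i, ∑ j, ∑ k, A i j k * f k i j := by
  rw [sum_comm]
  refine sum_congr rfl fun j _ => ?_
  rw [sum_comm]
  refine sum_congr rfl fun k _ => sum_congr rfl fun i _ => ?_
  rw [hA i j k, hA j k i]

lemma three_mul_sum_sum_sum_mul {A : ι → ι → ι → ℝ} (hA : ∀ i j k, A i j k = A j k i)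
    (f : ι → ι → ι → ℝ) :
    3 * ∑ i, ∑ j, ∑ k, A i j k * f i j k
      = ∑ i, ∑ j, ∑ k, A i j k * (f i j k + f k i j + f j k i) := by
  have h₁ := sum_sum_sum_mul_rotate hA f
  have h₂ := sum_sum_sum_mul_rotate hA fun i j k => f k i j
  simp only [mul_add, sum_add_distrib]
  linarith

lemma eq_zero_of_sum_sum_sum_nonpos {F : ι → ι → ι → ℝ} (hF : ∀ i j k, 0 ≤ F i j k)
    (h : ∑ i, ∑ j, ∑ k, F i j k ≤ 0) (i j k : ι) : F i j k = 0 := by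
  refine le_antisymm ?_ (hF i j k)
  calc F i j k ≤ ∑ k, F i j k := single_le_sum (fun k _ => hF i j k) (mem_univ k)
    _ ≤ ∑ j, ∑ k, F i j k :=
      single_le_sum (f := fun j => ∑ k, F i j k)
        (fun j _ => sum_nonneg fun k _ => hF i j k) (mem_univ j)
    _ ≤ ∑ i, ∑ j, ∑ k, F i j k :=
      single_le_sum (f := fun i => ∑ j, ∑ k, F i j k)
        (fun i _ => sum_nonneg fun j _ => sum_nonneg fun k _ => hF i j k) (mem_univ i)
    _ ≤ 0 := h

end TripleSum

theorem stmt_9_general (n : ℕ) (C : Fin n → Fin n → Fin n → ℝ)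
    (hsym : ∀ i j k : Fin n, (C i j k)^2 = (C j i k)^2 ∧ (C i j k)^2 = (C i k j)^2)
    (lam : Fin n → ℝ) (hlam : ∀ i, 1 ≤ lam i)
    (h : ∑ i, ∑ j, ∑ k, (C i j k)^2 * (lam k / (lam i * lam j) + 1 - 2 / lam i) ≤ 0) :
    ∀ i j k : Fin n, C i j k = 0 ∨ (lam i = 1 ∧ lam j = 1 ∧ lam k = 1) := by
  have hrot : ∀ i j k, C i j k ^ 2 = C j k i ^ 2 := fun i j k =>
    (hsym i j k).1.trans (hsym j i k).2
  have hsymmetrized : ∑ i, ∑ j, ∑ k,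
      C i j k ^ 2 * symmetrizedBracket (lam i) (lam j) (lam k) ≤ 0 := by
    simp only [← cyclic_sum_bracket]
    rw [← three_mul_sum_sum_sum_mul hrot fun i j k => lam k / (lam i * lam j) + 1 - 2 / lam i]
    linarith
  intro i j k
  have hterm := eq_zero_of_sum_sum_sum_nonpos
    (fun i j k => mul_nonneg (sq_nonneg (C i j k))
      (symmetrizedBracket_nonneg (hlam i) (hlam j) (hlam k))) hsymmetrized i j k
  rcases mul_eq_zero.1 hterm with hC | hbracket
  · exact .inl (pow_eq_zero_iff two_ne_zero |>.1 hC)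
  · exact .inr (eq_one_of_symmetrizedBracket_eq_zero (hlam i) (hlam j) (hlam k) hbracket)

theorem stmt_9 (n : ℕ) (hn : 1 ≤ n) (C : Fin n → Fin n → Fin n → ℝ)
    (hsym : ∀ i j k : Fin n, (C i j k)^2 = (C j i k)^2 ∧ (C i j k)^2 = (C i k j)^2)
    (lam : Fin n → ℝ) (hlam : ∀ i, 1 ≤ lam i)
    (h : ∑ i, ∑ j, ∑ k, (C i j k)^2 * (lam k / (lam i * lam j) + 1 - 2 / lam i) ≤ 0) :
    ∀ i j k : Fin n, C i j k = 0 ∨ (lam i = 1 ∧ lam j = 1 ∧ lam k = 1) :=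
  stmt_9_general n C hsym lam hlam h
end

section
/- Let g be a compact semi-simple real Lie algebra with bi-invariant inner product ⟨·,·⟩₀, orthonormal basis {E_i} of eigenvectors of a positive self-adjoint operator S with eigenvalues λ_i ≥ 1, and structure constants C_{ij}^k = ⟨[E_i,E_j],E_k⟩₀. If (1/4)Σ_{i,j,k}(C_{ij}^k)²[2/λ_i − λ_k/(λ_iλ_j)] ≥ (1/4)Σ_{i,j,k}(C_{ij}^k)², then λ_i = 1 for all i. -/
/-! Writing `f i j k = 2/λᵢ - λₖ/(λᵢλⱼ)`, the structure constants are skew in their last two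
indices, so the hypothesis may be symmetrised in `j, k`: it says that the sum of the
nonnegative terms `C²ᵢⱼₖ (2 - fᵢⱼₖ - fᵢₖⱼ)` is `≤ 0`. By AM-GM, `fᵢⱼₖ + fᵢₖⱼ ≤ 2/λᵢ`, which is
`< 2` as soon as `λᵢ > 1`; then every `Cᵢⱼₖ` vanishes, so `Eᵢ` is central, which the
nondegeneracy of the Killing form forbids. -/

open RealInnerProductSpace

section Sums

variable {ι : Type*} [Fintype ι]

lemma sum_sum_sum_swap (g : ι → ι → ι → ℝ) :
    ∑ i, ∑ j, ∑ k, g i j k = ∑ i, ∑ j, ∑ k, g i k j :=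
  Finset.sum_congr rfl fun _ _ => Finset.sum_comm

lemma le_sum_sum_sum_of_nonneg {g : ι → ι → ι → ℝ} (hg : ∀ i j k, 0 ≤ g i j k) (i j k : ι) :
    g i j k ≤ ∑ i, ∑ j, ∑ k, g i j k := by
  simp only [← Fintype.sum_prod_type']
  exact Finset.single_le_sum (f := fun p : ι × ι × ι => g p.1 p.2.1 p.2.2)
    (fun p _ => hg _ _ _) (Finset.mem_univ (i, j, k))

end Sums

lemma two_div_sub_add_two_div_sub_le {a b c : ℝ} (ha : 0 < a) (hb : 0 < b) (hc : 0 < c) :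
    (2 / a - c / (a * b)) + (2 / a - b / (a * c)) ≤ 2 / a := by
  have amgm : 2 / a ≤ c / (a * b) + b / (a * c) := by
    rw [div_add_div _ _ (by positivity) (by positivity),
      div_le_div_iff₀ (by positivity) (by positivity)]
    nlinarith [mul_nonneg (sq_nonneg a) (sq_nonneg (b - c)), mul_pos hb hc]
  linarith

lemma eq_zero_of_sum_sq_mul_weight_ge {ι : Type*} [Fintype ι] {C : ι → ι → ι → ℝ}
    (hC : ∀ i j k, C i k j = -C i j k) {lam : ι → ℝ} (hlam : ∀ i, 1 ≤ lam i)
    (h : ∑ i, ∑ j, ∑ k, (C i j k) ^ 2 * (2 / lam i - lam k / (lam i * lam j)) ≥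
      ∑ i, ∑ j, ∑ k, (C i j k) ^ 2)
    {i : ι} (hi : 1 < lam i) (j k : ι) : C i j k = 0 := by
  set f : ι → ι → ι → ℝ := fun i j k => 2 / lam i - lam k / (lam i * lam j)
  have hpos : ∀ i, 0 < lam i := fun i => one_pos.trans_le (hlam i)
  have hf : ∀ i j k, 2 - 2 / lam i ≤ 2 - f i j k - f i k j := fun i j k => by
    linarith [two_div_sub_add_two_div_sub_le (hpos i) (hpos j) (hpos k)]
  have hf_nonneg : ∀ i j k, 0 ≤ 2 - f i j k - f i k j := fun i j k => by
    have : 2 / lam i ≤ 2 := div_le_self zero_le_two (hlam i)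
    linarith [hf i j k]
  have hsq_swap : ∀ i j k, C i k j ^ 2 = C i j k ^ 2 := fun i j k => by rw [hC, neg_sq]
  have hsum : ∑ i, ∑ j, ∑ k, C i j k ^ 2 * (2 - f i j k - f i k j) ≤ 0 := by
    have hsymm : ∑ i, ∑ j, ∑ k, C i j k ^ 2 * f i k j = ∑ i, ∑ j, ∑ k, C i j k ^ 2 * f i j k := by
      rw [sum_sum_sum_swap]
      simp only [hsq_swap]
    have hexpand : ∀ i j k, C i j k ^ 2 * (2 - f i j k - f i k j) =
        2 * C i j k ^ 2 - C i j k ^ 2 * f i j k - C i j k ^ 2 * f i k j := fun i j k => by ring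
    simp only [hexpand, Finset.sum_sub_distrib, ← Finset.mul_sum, hsymm]
    linarith
  have hterm := (le_sum_sum_sum_of_nonneg
    (fun i j k => mul_nonneg (sq_nonneg (C i j k)) (hf_nonneg i j k)) i j k).trans hsum
  have hweight : 0 < 2 - f i j k - f i k j := by
    have : 2 / lam i < 2 := div_lt_self two_pos hi
    linarith [hf i j k]
  exact pow_eq_zero_iff two_ne_zero |>.mp
    (le_antisymm (nonpos_of_mul_nonpos_left hterm hweight) (sq_nonneg _))

section LieAlgebra

variable {L : Type*} [LieRing L]

lemma eq_zero_of_ad_eq_zero [LieAlgebra ℝ L]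
    (hss : ∀ X : L, (∀ Y : L, killingForm ℝ L X Y = 0) → X = 0)
    {x : L} (hx : LieAlgebra.ad ℝ L x = 0) : x = 0 :=
  hss x fun y => by simp [killingForm_apply_apply, hx]

variable [NormedAddCommGroup L] [InnerProductSpace ℝ L]

/- The additive structures of `LieRing L` and `NormedAddCommGroup L` are a priori unrelated, and
`0 : L` is the Lie one. Invariance of the inner product makes it orthogonal to everything, so the
two zeros agree. -/
lemma inner_zero_right_of_skew (hskew : ∀ X Y Z : L, ⟪⁅X, Y⁆, Z⟫ = -⟪Y, ⁅X, Z⁆⟫) (w : L) :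
    ⟪w, (0 : L)⟫ = 0 := by
  have hw := hskew 0 w 0
  have h0 := hskew 0 0 0
  rw [zero_lie, zero_lie] at hw
  rw [zero_lie] at h0
  linarith

lemma ne_zero_of_norm_eq_one_of_skew (hskew : ∀ X Y Z : L, ⟪⁅X, Y⁆, Z⟫ = -⟪Y, ⁅X, Z⁆⟫) {v : L}
    (hv : ‖v‖ = 1) : v ≠ 0 := by
  intro hv0
  have h := inner_zero_right_of_skew hskew (0 : L)
  rw [← hv0, real_inner_self_eq_norm_sq, hv] at h
  norm_num at h

lemma eq_zero_of_forall_inner_basis_of_skew (hskew : ∀ X Y Z : L, ⟪⁅X, Y⁆, Z⟫ = -⟪Y, ⁅X, Z⁆⟫)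
    {ι : Type*} [Fintype ι] (b : OrthonormalBasis ι ℝ L) {v : L} (hv : ∀ k, ⟪b k, v⟫ = 0) :
    v = 0 :=
  ext_inner_left ℝ fun w => by
    rw [inner_zero_right_of_skew hskew, ← b.sum_repr' w, sum_inner]
    simp [real_inner_smul_left, hv]

lemma inner_lie_lie_swap (hskew : ∀ X Y Z : L, ⟪⁅X, Y⁆, Z⟫ = -⟪Y, ⁅X, Z⁆⟫) (x y z : L) :
    ⟪⁅x, z⁆, y⟫ = -⟪⁅x, y⁆, z⟫ := by
  rw [hskew, real_inner_comm]

lemma ad_eq_zero_of_inner_lie_basis [LieAlgebra ℝ L]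
    (hskew : ∀ X Y Z : L, ⟪⁅X, Y⁆, Z⟫ = -⟪Y, ⁅X, Z⁆⟫)
    {ι : Type*} [Fintype ι] (b : OrthonormalBasis ι ℝ L) {x : L}
    (hx : ∀ j k, ⟪⁅x, b j⁆, b k⟫ = 0) : LieAlgebra.ad ℝ L x = 0 := by
  have hbasis : ∀ j, ⁅x, b j⁆ = 0 := fun j =>
    eq_zero_of_forall_inner_basis_of_skew hskew b fun k => by rw [real_inner_comm, hx]
  ext y
  rw [LieAlgebra.ad_apply, LinearMap.zero_apply]
  refine eq_zero_of_forall_inner_basis_of_skew hskew b fun k => ?_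
  rw [real_inner_comm, hskew, hbasis, inner_zero_right_of_skew hskew, neg_zero]

end LieAlgebra

theorem stmt_10_general {L : Type*} [LieRing L] [LieAlgebra ℝ L]
    [NormedAddCommGroup L] [InnerProductSpace ℝ L]
    (hskew : ∀ X Y Z : L, ⟪⁅X, Y⁆, Z⟫ = -⟪Y, ⁅X, Z⁆⟫)
    (hss : ∀ X : L, (∀ Y : L, killingForm ℝ L X Y = 0) → X = 0)
    {n : ℕ} (b : OrthonormalBasis (Fin n) ℝ L)
    (C : Fin n → Fin n → Fin n → ℝ) (hC : ∀ i j k, C i j k = ⟪⁅b i, b j⁆, b k⟫)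
    (lam : Fin n → ℝ)
    (hlam : ∀ i, 1 ≤ lam i)
    (h : (1/4 : ℝ) * ∑ i, ∑ j, ∑ k, (C i j k)^2 * (2 / lam i - lam k / (lam i * lam j)) ≥
         (1/4 : ℝ) * ∑ i, ∑ j, ∑ k, (C i j k)^2) :
    ∀ i, lam i = 1 := by
  have hCskew : ∀ i j k, C i k j = -C i j k := fun i j k => by
    rw [hC, hC, inner_lie_lie_swap hskew]
  have hsum := le_of_mul_le_mul_left h (by norm_num : (0 : ℝ) < 1 / 4)
  intro i
  by_contra hne
  have hi : 1 < lam i := (hlam i).lt_of_ne' hne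
  refine ne_zero_of_norm_eq_one_of_skew hskew (b.orthonormal.1 i)
    (eq_zero_of_ad_eq_zero hss (ad_eq_zero_of_inner_lie_basis hskew b ?_))
  intro j k
  rw [← hC]
  exact eq_zero_of_sum_sq_mul_weight_ge hCskew hlam hsum hi j k

theorem stmt_10 {L : Type*} [LieRing L] [LieAlgebra ℝ L]
    [NormedAddCommGroup L] [InnerProductSpace ℝ L] [FiniteDimensional ℝ L]
    (hskew : ∀ X Y Z : L, ⟪⁅X, Y⁆, Z⟫ = -⟪Y, ⁅X, Z⁆⟫)
    (hss : ∀ X : L, (∀ Y : L, killingForm ℝ L X Y = 0) → X = 0)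
    {n : ℕ} (b : OrthonormalBasis (Fin n) ℝ L)
    (C : Fin n → Fin n → Fin n → ℝ) (hC : ∀ i j k, C i j k = ⟪⁅b i, b j⁆, b k⟫)
    (S : L →ₗ[ℝ] L) (lam : Fin n → ℝ) (hS : ∀ i, S (b i) = lam i • b i)
    (hSsa : ∀ X Y : L, ⟪S X, Y⟫ = ⟪X, S Y⟫) (hSpos : ∀ i, 0 < lam i)
    (hlam : ∀ i, 1 ≤ lam i)
    (h : (1/4 : ℝ) * ∑ i, ∑ j, ∑ k, (C i j k)^2 * (2 / lam i - lam k / (lam i * lam j)) ≥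
         (1/4 : ℝ) * ∑ i, ∑ j, ∑ k, (C i j k)^2) :
    ∀ i, lam i = 1 :=
  stmt_10_general hskew hss b C hC lam hlam h
end
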